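/- Every subsequence of (p_n) that converges uniformly on [0,1] converges to a fixed point of the operator T: if n_1 < n_2 < … and p_{n_j} → p̄ uniformly, then p̄ is continuous and T p̄ = p̄. -/

import Mathlib

open Set Filter

noncomputable def Tmap (c : ℝ → ℝ) (g : ℕ → ℝ) (δ : ℝ) (p : ℝ → ℝ) (s : ℝ) : ℝ :=
  sInf {y : ℝ | ∃ k : ℕ, ∃ t : ℝ, 1 ≤ k ∧ 0 ≤ t ∧ t ≤ s ∧
    y = c (s - t) + g k + δ * k * p (t / k)}

noncomputable def interp (h : ℝ) (v : ℕ → ℝ) (x : ℝ) : ℝ :=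
  v ⌊x / h⌋₊ + (x / h - ⌊x / h⌋₊) * (v (⌊x / h⌋₊ + 1) - v ⌊x / h⌋₊)

noncomputable def gridVal (c : ℝ → ℝ) (g : ℕ → ℝ) (δ h : ℝ) : ℕ → ℝ
  | 0 => 0
  | j + 1 =>
    sInf {y : ℝ | ∃ k : ℕ, ∃ t : ℝ, 1 ≤ k ∧ 0 ≤ t ∧ t ≤ j * h ∧
      y = c ((j + 1) * h - t) + g k +
        δ * k * interp h (fun i => gridVal c g δ h (min i j)) (t / k)}
  termination_by j => j
  decreasing_by exact Nat.lt_succ_of_le (Nat.min_le_right i j)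

noncomputable def algP (c : ℝ → ℝ) (g : ℕ → ℝ) (δ : ℝ) (n : ℕ) : ℝ → ℝ :=
  interp ((1 / 2 : ℝ) ^ n) (gridVal c g δ ((1 / 2 : ℝ) ^ n))

open Topology

/-!
Each `p_n` is piecewise linear, hence continuous, so a uniform limit `p̄` is continuous. Fix `s`
and a grid point `σ` with `σ - h ≤ s ≤ σ`. The value `p_n σ` is the infimum of the same costs as
`T p̄ s`, except that `p_n` replaces `p̄` and `(σ, σ - h)` replaces `(s, s)` as the pair
(end point, range of `t`). Since `g k → ∞`, only the finitely many `k` with `g k < c 1` compete for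
either infimum, so both replacements move it by `O(ε)` once `|p_n - p̄| ≤ ε` and `h` is below the
moduli of continuity of `c` and `p̄` on `[0, 1]`; also `|p_n σ - p̄ s| ≤ 2ε`. Hence
`|T p̄ s - p̄ s| = O(ε)` for every `ε > 0`.
-/

section Interp

variable {h : ℝ} {v w : ℕ → ℝ}

lemma interp_zero (h : ℝ) (v : ℕ → ℝ) : interp h v 0 = v 0 := by
  simp [interp]

lemma interp_natCast_mul (hh : 0 < h) (v : ℕ → ℝ) (j : ℕ) : interp h v (j * h) = v j := by
  simp [interp, mul_div_cancel_right₀ _ hh.ne']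

lemma natFloor_div_mul_le (hh : 0 < h) {x : ℝ} (hx : 0 ≤ x) : ⌊x / h⌋₊ * h ≤ x :=
  (le_div_iff₀ hh).1 (Nat.floor_le (div_nonneg hx hh.le))

lemma lt_natFloor_div_add_one_mul (hh : 0 < h) (x : ℝ) : x < (⌊x / h⌋₊ + 1) * h :=
  (div_lt_iff₀ hh).1 (Nat.lt_floor_add_one _)

lemma natFloor_div_add_one_le (hh : 0 < h) {x : ℝ} (hx : 0 ≤ x) {J : ℕ} (hxJ : x < J * h) :
    ⌊x / h⌋₊ + 1 ≤ J :=
  Nat.floor_lt (div_nonneg hx hh.le) |>.2 ((div_lt_iff₀ hh).2 hxJ)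

lemma interp_eqOn_Icc (hh : 0 < h) (v : ℕ → ℝ) (i : ℕ) :
    EqOn (interp h v) (fun x => v i + (x / h - i) * (v (i + 1) - v i))
      (Icc (i * h) ((i + 1) * h)) := by
  rintro x ⟨hix, hxi⟩
  rcases hxi.eq_or_lt with rfl | hxi
  · have := interp_natCast_mul hh v (i + 1)
    push_cast at this
    simp [this, mul_div_cancel_right₀ _ hh.ne']
  · have hfloor : ⌊x / h⌋₊ = i := by
      rw [Nat.floor_eq_iff (div_nonneg ((by positivity : (0 : ℝ) ≤ i * h).trans hix) hh.le),
        le_div_iff₀ hh, div_lt_iff₀ hh]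
      exact ⟨hix, hxi⟩
    simp [interp, hfloor]

lemma continuousOn_interp (hh : 0 < h) (v : ℕ → ℝ) : ContinuousOn (interp h v) (Ici 0) := by
  have hfin : LocallyFinite fun i : ℕ => Icc (i * h) ((i + 1) * h) := by
    intro x
    refine ⟨Iio (x + 1), Iio_mem_nhds (lt_add_one x), (finite_Iic ⌈(x + 1) / h⌉₊).subset ?_⟩
    rintro i ⟨y, ⟨hiy, -⟩, hyx : y < x + 1⟩
    exact Nat.cast_le.1 (((le_div_iff₀ hh).2 (by linarith)).trans (Nat.le_ceil _))
  refine (hfin.continuousOn_iUnion (fun _ => isClosed_Icc) fun i =>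
    (Continuous.continuousOn (by fun_prop)).congr (interp_eqOn_Icc hh v i)).mono fun x hx => ?_
  exact mem_iUnion.2 ⟨⌊x / h⌋₊, natFloor_div_mul_le hh hx, (lt_natFloor_div_add_one_mul hh x).le⟩

lemma interp_nonneg (hh : 0 < h) {J : ℕ} {x : ℝ} (hx : 0 ≤ x) (hxJ : x ≤ J * h)
    (hv : ∀ i ≤ J, 0 ≤ v i) : 0 ≤ interp h v x := by
  rcases hxJ.eq_or_lt with rfl | hxJ
  · rw [interp_natCast_mul hh]
    exact hv J le_rfl
  · set i := ⌊x / h⌋₊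
    have hiJ : i + 1 ≤ J := natFloor_div_add_one_le hh hx hxJ
    have hθ0 : 0 ≤ x / h - i := sub_nonneg.2 (Nat.floor_le (div_nonneg hx hh.le))
    have hθ1 : x / h - i ≤ 1 := by linarith [Nat.lt_floor_add_one (x / h)]
    rw [interp_eqOn_Icc hh v i ⟨natFloor_div_mul_le hh hx, (lt_natFloor_div_add_one_mul hh x).le⟩]
    nlinarith [mul_nonneg (sub_nonneg.2 hθ1) (hv i (by omega)), mul_nonneg hθ0 (hv (i + 1) hiJ)]

lemma interp_congr (hh : 0 < h) {J : ℕ} {x : ℝ} (hx : 0 ≤ x) (hxJ : x ≤ J * h)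
    (hvw : ∀ i ≤ J, v i = w i) : interp h v x = interp h w x := by
  rcases hxJ.eq_or_lt with rfl | hxJ
  · rw [interp_natCast_mul hh, interp_natCast_mul hh, hvw J le_rfl]
  · have hiJ := natFloor_div_add_one_le hh hx hxJ
    rw [interp, interp, hvw _ (by omega), hvw _ hiJ]

end Interp

/-- With `T = s` these are the candidates of the infimum `Tmap p s`; with `s = (j + 1) * h` and
`T = j * h` those of the grid recursion for `p_n`. -/
def costSet (c : ℝ → ℝ) (g : ℕ → ℝ) (δ : ℝ) (p : ℝ → ℝ) (s T : ℝ) : Set ℝ :=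
  {y | ∃ k : ℕ, ∃ t : ℝ, 1 ≤ k ∧ 0 ≤ t ∧ t ≤ T ∧ y = c (s - t) + g k + δ * k * p (t / k)}

section CostSet

variable {c : ℝ → ℝ} {g : ℕ → ℝ} {δ : ℝ} {p q : ℝ → ℝ} {s T s' T' : ℝ}

lemma Tmap_eq_sInf_costSet : Tmap c g δ p s = sInf (costSet c g δ p s s) := rfl

lemma MonotoneOn.nonneg_of_map_zero (hc_mono : MonotoneOn c (Icc 0 1)) (hc0 : c 0 = 0) :
    ∀ x ∈ Icc (0 : ℝ) 1, 0 ≤ c x :=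
  fun _ hx => hc0 ▸ hc_mono ⟨le_rfl, zero_le_one⟩ hx hx.1

lemma div_natCast_mem_Icc {t : ℝ} (ht : t ∈ Icc 0 T) {k : ℕ} (hk : 1 ≤ k) :
    t / k ∈ Icc 0 T :=
  ⟨div_nonneg ht.1 k.cast_nonneg, (div_le_self ht.1 (Nat.one_le_cast.2 hk)).trans ht.2⟩

lemma le_cost (hc : ∀ x ∈ Icc (0 : ℝ) 1, 0 ≤ c x) (hδ : 0 ≤ δ)
    (hp : ∀ x ∈ Icc 0 T, 0 ≤ p x) (hTs : T ≤ s) (hs : s ≤ 1) {k : ℕ} (hk : 1 ≤ k) {t : ℝ}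
    (ht : t ∈ Icc 0 T) : g k ≤ c (s - t) + g k + δ * k * p (t / k) := by
  have hc' := hc (s - t) ⟨by linarith [ht.2], by linarith [ht.1]⟩
  have hp' := hp _ (div_natCast_mem_Icc ht hk)
  have : 0 ≤ δ * k * p (t / k) := by positivity
  linarith

lemma costSet_nonneg (hc : ∀ x ∈ Icc (0 : ℝ) 1, 0 ≤ c x) (hδ : 0 ≤ δ)
    (hg : ∀ k : ℕ, 1 ≤ k → 0 ≤ g k) (hp : ∀ x ∈ Icc 0 T, 0 ≤ p x) (hTs : T ≤ s) (hs : s ≤ 1) :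
    ∀ y ∈ costSet c g δ p s T, 0 ≤ y := by
  rintro _ ⟨k, t, hk, ht0, htT, rfl⟩
  exact (hg k hk).trans (le_cost hc hδ hp hTs hs hk ⟨ht0, htT⟩)

lemma map_mem_costSet (hp0 : p 0 = 0) (hg1 : g 1 = 0) (hT : 0 ≤ T) :
    c s ∈ costSet c g δ p s T :=
  ⟨1, 0, le_rfl, le_rfl, hT, by simp [hp0, hg1]⟩

/-- When `g k ≥ c 1`, the `k`-th candidates on the right are beaten by the candidate `c s'` on the
left, so only the `k` with `g k < c 1` need to be matched. -/
lemma sInf_costSet_le_add (hc_mono : MonotoneOn c (Icc 0 1)) (hc0 : c 0 = 0)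
    (hg_nonneg : ∀ k : ℕ, 1 ≤ k → 0 ≤ g k) (hg1 : g 1 = 0) (hδ : 0 ≤ δ)
    (hp : ∀ x ∈ Icc (0 : ℝ) 1, 0 ≤ p x) (hq : ∀ x ∈ Icc (0 : ℝ) 1, 0 ≤ q x) (hq0 : q 0 = 0)
    (hT : 0 ≤ T) (hTs : T ≤ s) (hs : s ≤ 1) (hT' : 0 ≤ T') (hTs' : T' ≤ s') (hs' : s' ≤ 1)
    {ε : ℝ} (hε : 0 ≤ ε)
    (H : ∀ k : ℕ, 1 ≤ k → g k < c 1 → ∀ t ∈ Icc 0 T, ∃ t' ∈ Icc 0 T',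
      c (s' - t') + δ * k * q (t' / k) ≤ c (s - t) + δ * k * p (t / k) + ε) :
    sInf (costSet c g δ q s' T') ≤ sInf (costSet c g δ p s T) + ε := by
  have hc := hc_mono.nonneg_of_map_zero hc0
  have hbdd : BddBelow (costSet c g δ q s' T') :=
    ⟨0, costSet_nonneg hc hδ hg_nonneg (fun x hx => hq x ⟨hx.1, hx.2.trans (hTs'.trans hs')⟩)
      hTs' hs'⟩
  rw [← sub_le_iff_le_add]
  refine le_csInf ⟨_, 1, 0, le_rfl, le_rfl, hT, rfl⟩ ?_
  rintro _ ⟨k, t, hk, ht0, htT, rfl⟩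
  rw [sub_le_iff_le_add]
  by_cases hgk : c 1 ≤ g k
  · calc sInf (costSet c g δ q s' T') ≤ c s' := csInf_le hbdd (map_mem_costSet hq0 hg1 hT')
      _ ≤ c 1 := hc_mono ⟨hT'.trans hTs', hs'⟩ ⟨zero_le_one, le_rfl⟩ hs'
      _ ≤ g k := hgk
      _ ≤ c (s - t) + g k + δ * k * p (t / k) :=
        le_cost hc hδ (fun x hx => hp x ⟨hx.1, hx.2.trans (hTs.trans hs)⟩) hTs hs hk ⟨ht0, htT⟩
      _ ≤ _ := le_add_of_nonneg_right hε
  · obtain ⟨t', ⟨ht'0, ht'T⟩, hle⟩ := H k hk (not_le.1 hgk) t ⟨ht0, htT⟩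
    calc sInf (costSet c g δ q s' T') ≤ c (s' - t') + g k + δ * k * q (t' / k) :=
          csInf_le hbdd ⟨k, t', hk, ht'0, ht'T, rfl⟩
      _ ≤ _ := by linarith

end CostSet

section Perturbation

variable {c : ℝ → ℝ} {g : ℕ → ℝ} {δ : ℝ} {p q : ℝ → ℝ} {s T s' T' ε : ℝ} {K : ℕ}

lemma sInf_costSet_le_of_le_add (hc_mono : MonotoneOn c (Icc 0 1)) (hc0 : c 0 = 0)
    (hg_nonneg : ∀ k : ℕ, 1 ≤ k → 0 ≤ g k) (hg1 : g 1 = 0) (hδ : 0 ≤ δ)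
    (hK : ∀ k ≥ K, c 1 ≤ g k)
    (hp : ∀ x ∈ Icc (0 : ℝ) 1, 0 ≤ p x) (hq : ∀ x ∈ Icc (0 : ℝ) 1, 0 ≤ q x) (hq0 : q 0 = 0)
    (hε : 0 ≤ ε) (hqp : ∀ x ∈ Icc (0 : ℝ) 1, q x ≤ p x + ε)
    (hT : 0 ≤ T) (hTs : T ≤ s) (hs : s ≤ 1) :
    sInf (costSet c g δ q s T) ≤ sInf (costSet c g δ p s T) + δ * K * ε := by
  refine sInf_costSet_le_add hc_mono hc0 hg_nonneg hg1 hδ hp hq hq0 hT hTs hs hT hTs hs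
    (by positivity) fun k hk hgk t ht => ⟨t, ht, ?_⟩
  have hkK : (k : ℝ) ≤ K := Nat.cast_le.2 (not_lt.1 fun hKk => (hK k hKk.le).not_gt hgk)
  have hq' := hqp (t / k) (Icc_subset_Icc_right (hTs.trans hs) (div_natCast_mem_Icc ht hk))
  calc c (s - t) + δ * k * q (t / k) ≤ c (s - t) + δ * k * p (t / k) + δ * k * ε := by
        nlinarith [mul_le_mul_of_nonneg_left hq' (by positivity : 0 ≤ δ * k)]
    _ ≤ c (s - t) + δ * k * p (t / k) + δ * K * ε := by gcongr

lemma sInf_costSet_le_of_dist_le (hc_mono : MonotoneOn c (Icc 0 1)) (hc0 : c 0 = 0)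
    (hg_nonneg : ∀ k : ℕ, 1 ≤ k → 0 ≤ g k) (hg1 : g 1 = 0) (hδ : 0 ≤ δ)
    (hK : ∀ k ≥ K, c 1 ≤ g k) (hp : ∀ x ∈ Icc (0 : ℝ) 1, 0 ≤ p x) (hp0 : p 0 = 0)
    {h : ℝ} (hε : 0 ≤ ε)
    (hc : ∀ x ∈ Icc (0 : ℝ) 1, ∀ y ∈ Icc (0 : ℝ) 1, dist x y ≤ 2 * h → dist (c x) (c y) ≤ ε)
    (hpc : ∀ x ∈ Icc (0 : ℝ) 1, ∀ y ∈ Icc (0 : ℝ) 1, dist x y ≤ h → dist (p x) (p y) ≤ ε)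
    (hT : 0 ≤ T) (hTs : T ≤ s) (hs : s ≤ 1) (hT' : 0 ≤ T') (hTs' : T' ≤ s') (hs' : s' ≤ 1)
    (hss' : dist s' s ≤ h) (hTT' : T ≤ T' + h) :
    sInf (costSet c g δ p s' T') ≤ sInf (costSet c g δ p s T) + (1 + δ * K) * ε := by
  refine sInf_costSet_le_add hc_mono hc0 hg_nonneg hg1 hδ hp hp hp0 hT hTs hs hT' hTs' hs'
    (by positivity) fun k hk hgk t ht => ⟨min t T', ⟨le_min ht.1 hT', min_le_right _ _⟩, ?_⟩
  have hkK : (k : ℝ) ≤ K := Nat.cast_le.2 (not_lt.1 fun hKk => (hK k hKk.le).not_gt hgk)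
  have hk1 : (1 : ℝ) ≤ k := Nat.one_le_cast.2 hk
  have hh : 0 ≤ h := dist_nonneg.trans hss'
  have hshift : 0 ≤ t - min t T' ∧ t - min t T' ≤ h := by
    rcases min_cases t T' with ⟨hmin, hle⟩ | ⟨hmin, hle⟩ <;> rw [hmin] <;> constructor <;>
      linarith [ht.2]
  set t' := min t T'
  have ht' : t' ∈ Icc 0 T := ⟨le_min ht.1 hT', (min_le_left _ _).trans ht.2⟩
  have ht'T' : t' ≤ T' := min_le_right _ _
  rw [Real.dist_eq, abs_le] at hss'
  have hcost : c (s' - t') ≤ c (s - t) + ε := by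
    have := hc (s' - t') ⟨by linarith, by linarith [ht'.1]⟩ (s - t)
      ⟨by linarith [ht.2], by linarith [ht.1]⟩
      (by rw [Real.dist_eq, abs_le]; constructor <;> linarith)
    rw [Real.dist_eq, abs_le] at this
    linarith
  have hval : p (t' / k) ≤ p (t / k) + ε := by
    have hdiv : t / k - t' / k ≤ t - t' := by
      rw [← sub_div]; exact div_le_self hshift.1 hk1
    have hdiv' : 0 ≤ t / k - t' / k := by
      rw [← sub_div]; exact div_nonneg hshift.1 (by positivity)
    have := hpc _ (Icc_subset_Icc_right (hTs.trans hs) (div_natCast_mem_Icc ht' hk)) _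
      (Icc_subset_Icc_right (hTs.trans hs) (div_natCast_mem_Icc ht hk))
      (by rw [Real.dist_eq, abs_le]; constructor <;> linarith)
    rw [Real.dist_eq, abs_le] at this
    linarith
  calc c (s' - t') + δ * k * p (t' / k) ≤ c (s - t) + ε + δ * k * (p (t / k) + ε) := by
        gcongr
    _ ≤ c (s - t) + δ * k * p (t / k) + (1 + δ * K) * ε := by
        nlinarith [mul_le_mul_of_nonneg_right (mul_le_mul_of_nonneg_left hkK hδ) hε]

end Perturbation

section Grid

variable {c : ℝ → ℝ} {g : ℕ → ℝ} {δ h : ℝ}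

lemma gridVal_zero : gridVal c g δ h 0 = 0 := by
  rw [gridVal]

lemma gridVal_succ (hh : 0 < h) (j : ℕ) :
    gridVal c g δ h (j + 1) =
      sInf (costSet c g δ (interp h (gridVal c g δ h)) ((j + 1) * h) (j * h)) := by
  rw [gridVal]
  congr 1
  refine Set.ext fun y => exists_congr fun k => exists_congr fun t => and_congr_right fun hk =>
    and_congr_right fun ht0 => and_congr_right fun htj => ?_
  have ht : t / k ∈ Icc 0 (j * h) := div_natCast_mem_Icc ⟨ht0, htj⟩ hk
  rw [interp_congr hh ht.1 ht.2 fun i hi => by rw [min_eq_left hi]]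

lemma gridVal_nonneg (hc : ∀ x ∈ Icc (0 : ℝ) 1, 0 ≤ c x) (hg_nonneg : ∀ k : ℕ, 1 ≤ k → 0 ≤ g k)
    (hδ : 0 ≤ δ) (hh : 0 < h) (j : ℕ) (hj : j * h ≤ 1) : 0 ≤ gridVal c g δ h j := by
  induction j using Nat.strong_induction_on with
  | _ j ih =>
    rcases j with _ | j
    · exact gridVal_zero.ge
    · push_cast at hj
      rw [gridVal_succ hh]
      refine Real.sInf_nonneg (costSet_nonneg hc hδ hg_nonneg (fun x hx => ?_) (by linarith) hj)
      refine interp_nonneg hh hx.1 hx.2 fun i hi => ih i (by omega) ?_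
      nlinarith [(Nat.cast_le (α := ℝ)).2 hi]

lemma two_pow_mul_half_pow (n : ℕ) : ((2 ^ n : ℕ) : ℝ) * (1 / 2) ^ n = 1 := by
  rw [Nat.cast_pow, ← mul_pow]
  norm_num

lemma natCast_mul_half_pow_le_one {n i : ℕ} (hi : i ≤ 2 ^ n) : i * (1 / 2 : ℝ) ^ n ≤ 1 :=
  calc (i : ℝ) * (1 / 2) ^ n ≤ ((2 ^ n : ℕ) : ℝ) * (1 / 2) ^ n := by gcongr
    _ = 1 := two_pow_mul_half_pow n

lemma algP_zero (n : ℕ) : algP c g δ n 0 = 0 := by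
  rw [algP, interp_zero, gridVal_zero]

lemma algP_natCast_add_one_mul (n j : ℕ) :
    algP c g δ n ((j + 1) * (1 / 2) ^ n) =
      sInf (costSet c g δ (algP c g δ n) ((j + 1) * (1 / 2) ^ n) (j * (1 / 2) ^ n)) := by
  have hh : (0 : ℝ) < (1 / 2) ^ n := by positivity
  rw [algP, ← Nat.cast_add_one, interp_natCast_mul hh, gridVal_succ hh, Nat.cast_add_one]

lemma algP_nonneg (hc : ∀ x ∈ Icc (0 : ℝ) 1, 0 ≤ c x) (hg_nonneg : ∀ k : ℕ, 1 ≤ k → 0 ≤ g k)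
    (hδ : 0 ≤ δ) (n : ℕ) : ∀ x ∈ Icc (0 : ℝ) 1, 0 ≤ algP c g δ n x := by
  intro x hx
  have hh : (0 : ℝ) < (1 / 2) ^ n := by positivity
  exact interp_nonneg hh hx.1 ((two_pow_mul_half_pow n).symm ▸ hx.2) fun i hi =>
    gridVal_nonneg hc hg_nonneg hδ hh i (natCast_mul_half_pow_le_one hi)

lemma continuousOn_algP (n : ℕ) : ContinuousOn (algP c g δ n) (Icc 0 1) :=
  (continuousOn_interp (by positivity) _).mono Icc_subset_Ici_self

lemma exists_grid_bracket (n : ℕ) {s : ℝ} (hs : s ∈ Icc (0 : ℝ) 1) :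
    ∃ j : ℕ, j * (1 / 2 : ℝ) ^ n ≤ s ∧ s ≤ (j + 1) * (1 / 2) ^ n ∧
      (j + 1) * (1 / 2 : ℝ) ^ n ≤ 1 := by
  have hh : (0 : ℝ) < (1 / 2) ^ n := by positivity
  rcases hs.2.lt_or_eq with hs1 | rfl
  · have hJ := natFloor_div_add_one_le hh hs.1 ((two_pow_mul_half_pow n).symm ▸ hs1)
    refine ⟨⌊s / (1 / 2) ^ n⌋₊, natFloor_div_mul_le hh hs.1,
      (lt_natFloor_div_add_one_mul hh s).le, ?_⟩
    exact_mod_cast natCast_mul_half_pow_le_one hJ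
  · obtain ⟨m, hm⟩ : ∃ m, 2 ^ n = m + 1 := ⟨2 ^ n - 1, (Nat.sub_add_cancel n.one_le_two_pow).symm⟩
    have h1 : ((m : ℝ) + 1) * (1 / 2) ^ n = 1 := by exact_mod_cast hm ▸ two_pow_mul_half_pow n
    exact ⟨m, by linarith, h1.ge, h1.le⟩

end Grid

lemma abs_Tmap_sub_le {c : ℝ → ℝ} {g : ℕ → ℝ} {δ : ℝ} {K : ℕ}
    (hc_mono : MonotoneOn c (Icc 0 1)) (hc0 : c 0 = 0)
    (hg_nonneg : ∀ k : ℕ, 1 ≤ k → 0 ≤ g k) (hg1 : g 1 = 0) (hδ : 0 ≤ δ)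
    (hK : ∀ k ≥ K, c 1 ≤ g k) {p : ℝ → ℝ} (hp : ∀ x ∈ Icc (0 : ℝ) 1, 0 ≤ p x) (hp0 : p 0 = 0)
    {n : ℕ} {ε : ℝ} (hε : 0 ≤ ε)
    (hpn : ∀ x ∈ Icc (0 : ℝ) 1, dist (p x) (algP c g δ n x) ≤ ε)
    (hc : ∀ x ∈ Icc (0 : ℝ) 1, ∀ y ∈ Icc (0 : ℝ) 1,
      dist x y ≤ 2 * (1 / 2) ^ n → dist (c x) (c y) ≤ ε)
    (hpc : ∀ x ∈ Icc (0 : ℝ) 1, ∀ y ∈ Icc (0 : ℝ) 1,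
      dist x y ≤ (1 / 2) ^ n → dist (p x) (p y) ≤ ε)
    {s : ℝ} (hs : s ∈ Icc (0 : ℝ) 1) :
    |Tmap c g δ p s - p s| ≤ (3 + 2 * δ * K) * ε := by
  obtain ⟨j, hjs, hsσ, hσ1⟩ := exists_grid_bracket n hs
  have hh : (0 : ℝ) < (1 / 2) ^ n := by positivity
  set h : ℝ := (1 / 2) ^ n
  set σ : ℝ := (j + 1) * h
  have hjh : 0 ≤ j * h := by positivity
  have hjσ : j * h ≤ σ := by linarith
  have hσ : σ ∈ Icc (0 : ℝ) 1 := ⟨hjh.trans hjσ, hσ1⟩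
  have hdist : dist σ s ≤ h := by rw [Real.dist_eq, abs_le]; constructor <;> linarith
  have hpn' : ∀ x ∈ Icc (0 : ℝ) 1, p x ≤ algP c g δ n x + ε ∧ algP c g δ n x ≤ p x + ε := by
    intro x hx
    have := hpn x hx
    rw [Real.dist_eq, abs_le] at this
    constructor <;> linarith
  have hn := algP_nonneg (hc_mono.nonneg_of_map_zero hc0) hg_nonneg hδ n
  have h_to_grid := sInf_costSet_le_of_dist_le hc_mono hc0 hg_nonneg hg1 hδ hK hp hp0 hε hc hpc
    hjh hjσ hσ1 hs.1 le_rfl hs.2 (dist_comm σ s ▸ hdist) (by linarith)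
  have h_from_grid := sInf_costSet_le_of_dist_le hc_mono hc0 hg_nonneg hg1 hδ hK hp hp0 hε hc hpc
    hs.1 le_rfl hs.2 hjh hjσ hσ1 hdist (by linarith)
  have h_to_algP := sInf_costSet_le_of_le_add hc_mono hc0 hg_nonneg hg1 hδ hK hn hp hp0 hε
    (fun x hx => (hpn' x hx).1) hjh hjσ hσ1
  have h_from_algP := sInf_costSet_le_of_le_add hc_mono hc0 hg_nonneg hg1 hδ hK hp hn
    (algP_zero n) hε (fun x hx => (hpn' x hx).2) hjh hjσ hσ1
  have hσs := hpc σ hσ s hs hdist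
  rw [Real.dist_eq, abs_le] at hσs
  have hrec := algP_natCast_add_one_mul (c := c) (g := g) (δ := δ) n j
  rw [Tmap_eq_sInf_costSet, abs_sub_le_iff]
  constructor <;> linarith [hpn' σ hσ]

lemma eq_of_forall_abs_sub_le_mul {a b C : ℝ} (hC : 0 < C) (h : ∀ ε > 0, |a - b| ≤ C * ε) :
    a = b :=
  eq_of_forall_dist_le fun ε hε => by
    simpa [Real.dist_eq, mul_div_cancel₀ _ hC.ne'] using h (ε / C) (by positivity)

theorem algP_subseq_limit_is_fixed_point_general (c : ℝ → ℝ) (g : ℕ → ℝ) (δ : ℝ)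
(hc_diff : DifferentiableOn ℝ c (Set.Icc 0 1))
    (hc_mono : StrictMonoOn c (Set.Icc 0 1))
    (hc0 : c 0 = 0)
    (hg1 : g 1 = 0) (hg_nonneg : ∀ k : ℕ, 1 ≤ k → 0 ≤ g k)
    (hg_top : Tendsto g atTop atTop)
    (hδ : 1 < δ) :
    ∀ φ : ℕ → ℕ, StrictMono φ →
      ∀ pbar : ℝ → ℝ,
        TendstoUniformlyOn (fun j : ℕ => algP c g δ (φ j)) pbar atTop (Set.Icc 0 1) →
        ContinuousOn pbar (Set.Icc 0 1) ∧
          ∀ s ∈ Set.Icc (0 : ℝ) 1, Tmap c g δ pbar s = pbar s := by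
  intro φ hφ pbar hlim
  have hδ0 : 0 ≤ δ := by linarith
  have hcont : ContinuousOn pbar (Icc 0 1) :=
    hlim.continuousOn (Eventually.of_forall fun j => continuousOn_algP (φ j)).frequently
  refine ⟨hcont, fun s hs => ?_⟩
  have hpbar : ∀ x ∈ Icc (0 : ℝ) 1, 0 ≤ pbar x := fun x hx =>
    ge_of_tendsto (hlim.tendsto_at hx) (Eventually.of_forall fun j => algP_nonneg
      (hc_mono.monotoneOn.nonneg_of_map_zero hc0) hg_nonneg hδ0 _ x hx)
  have hpbar0 : pbar 0 = 0 := tendsto_nhds_unique (hlim.tendsto_at ⟨le_rfl, zero_le_one⟩)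
    (by simp only [algP_zero]; exact tendsto_const_nhds)
  obtain ⟨K, hK⟩ := (hg_top.eventually_ge_atTop (c 1)).exists_forall_of_atTop
  refine eq_of_forall_abs_sub_le_mul (by positivity : 0 < 3 + 2 * δ * K) fun ε hε => ?_
  obtain ⟨ηc, hηc, hcη⟩ := Metric.uniformContinuousOn_iff_le.1
    (isCompact_Icc.uniformContinuousOn_of_continuous hc_diff.continuousOn) ε hε
  obtain ⟨ηp, hηp, hpη⟩ := Metric.uniformContinuousOn_iff_le.1
    (isCompact_Icc.uniformContinuousOn_of_continuous hcont) ε hε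
  have hmesh : Tendsto (fun j => 2 * (1 / 2 : ℝ) ^ φ j) atTop (𝓝 0) := by
    simpa using ((tendsto_pow_atTop_nhds_zero_of_lt_one (r := (1 / 2 : ℝ)) (by norm_num)
      (by norm_num)).comp hφ.tendsto_atTop).const_mul 2
  obtain ⟨j, hj_close, hj_mesh⟩ := ((Metric.tendstoUniformlyOn_iff.1 hlim ε hε).and
    (hmesh.eventually_lt_const (lt_min hηc hηp))).exists
  have hh : (0 : ℝ) ≤ (1 / 2) ^ φ j := by positivity
  exact abs_Tmap_sub_le hc_mono.monotoneOn hc0 hg_nonneg hg1 hδ0 hK hpbar hpbar0 hε.le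
    (fun x hx => (hj_close x hx).le)
    (fun x hx y hy hxy => hcη x hx y hy (hxy.trans (hj_mesh.le.trans (min_le_left _ _))))
    (fun x hx y hy hxy => hpη x hx y hy (by linarith [min_le_right ηc ηp])) hs

theorem algP_subseq_limit_is_fixed_point (c : ℝ → ℝ) (g : ℕ → ℝ) (δ : ℝ)
(hc_diff : DifferentiableOn ℝ c (Set.Icc 0 1))
    (hc_mono : StrictMonoOn c (Set.Icc 0 1))
    (hc_conv : StrictConvexOn ℝ (Set.Icc 0 1) c)
    (hc0 : c 0 = 0) (hc'0 : 0 < deriv c 0)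
    (hg_mono : StrictMonoOn g {k : ℕ | 1 ≤ k})
    (hg1 : g 1 = 0) (hg_nonneg : ∀ k : ℕ, 1 ≤ k → 0 ≤ g k)
    (hg_top : Tendsto g atTop atTop)
    (hδ : 1 < δ) :
    ∀ φ : ℕ → ℕ, StrictMono φ →
      ∀ pbar : ℝ → ℝ,
        TendstoUniformlyOn (fun j : ℕ => algP c g δ (φ j)) pbar atTop (Set.Icc 0 1) →
        ContinuousOn pbar (Set.Icc 0 1) ∧
          ∀ s ∈ Set.Icc (0 : ℝ) 1, Tmap c g δ pbar s = pbar s :=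
  algP_subseq_limit_is_fixed_point_general c g δ hc_diff hc_mono hc0 hg1 hg_nonneg hg_top hδ
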